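/- Let H be a Hilbert space, θ ∈ H a unit vector, and B_1,…,B_n : ℝ → B(H) continuously differentiable uniformly bounded operator families such that B_i(τ)θ is independent of τ. If there is an integrable function c with ‖[B_i'(τ), B_j(τ)]‖ ≤ c(τ) for all i,j and τ ≤ 0, then Ψ(τ) = B_1(τ)⋯B_n(τ)θ converges in H as τ → −∞. -/

import Mathlib

/-!
Since `B_i(τ)θ` does not depend on `τ`, `B_i'(τ)θ = 0`. Hence pushing `B_i'` to the right through
`B_{i+1} ⋯ B_n` leaves only commutator terms, `‖B_i' B_{i+1} ⋯ B_n θ‖ ≤ n c M^(n-1) ‖θ‖`, and the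
Leibniz rule gives `‖Ψ'(τ)‖ ≤ C c(τ)` for `τ ≤ 0`. So `Ψ'` is integrable on `(-∞, 0]` and `Ψ`
converges at `-∞` by the fundamental theorem of calculus.
-/

open Filter MeasureTheory

section Commutator

variable {𝕜 E : Type*} [NontriviallyNormedField 𝕜] [NormedAddCommGroup E] [NormedSpace 𝕜 E]

theorem ContinuousLinearMap.norm_list_prod_apply_le {L : List (E →L[𝕜] E)} {M : ℝ}
    (hM : ∀ B ∈ L, ‖B‖ ≤ M) (v : E) : ‖L.prod v‖ ≤ M ^ L.length * ‖v‖ := by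
  induction L with
  | nil => simp
  | cons B L ih =>
    rw [List.forall_mem_cons] at hM
    calc ‖(B :: L).prod v‖ = ‖B (L.prod v)‖ := rfl
      _ ≤ M * ‖L.prod v‖ := B.le_of_opNorm_le hM.1 _
      _ ≤ M * (M ^ L.length * ‖v‖) := by
        gcongr
        exacts [(norm_nonneg B).trans hM.1, ih hM.2]
      _ = M ^ (B :: L).length * ‖v‖ := by rw [List.length_cons, pow_succ]; ring

theorem ContinuousLinearMap.norm_apply_list_prod_apply_le {D : E →L[𝕜] E}
    {L : List (E →L[𝕜] E)} {v : E} {M c : ℝ} (hDv : D v = 0) (hM : ∀ B ∈ L, ‖B‖ ≤ M)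
    (hc : ∀ B ∈ L, ‖D * B - B * D‖ ≤ c) :
    ‖D (L.prod v)‖ ≤ L.length * c * M ^ (L.length - 1) * ‖v‖ := by
  induction L with
  | nil => simp [hDv]
  | cons B L ih =>
    rw [List.forall_mem_cons] at hM hc
    have hM0 : 0 ≤ M := (norm_nonneg B).trans hM.1
    have hc0 : 0 ≤ c := (norm_nonneg _).trans hc.1
    have hsplit : D ((B :: L).prod v) = (D * B - B * D) (L.prod v) + B (D (L.prod v)) := by
      simp
    have hpow : M * M ^ (L.length - 1) * L.length = M ^ L.length * L.length := by
      rcases Nat.eq_zero_or_pos L.length with h | h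
      · simp [h]
      · rw [mul_pow_sub_one h.ne']
    calc ‖D ((B :: L).prod v)‖
        ≤ c * (M ^ L.length * ‖v‖) + M * (L.length * c * M ^ (L.length - 1) * ‖v‖) := by
          rw [hsplit]
          refine (norm_add_le _ _).trans (add_le_add ?_ ?_)
          · exact ((D * B - B * D).le_of_opNorm_le hc.1 _).trans
              (by gcongr; exact norm_list_prod_apply_le hM.2 v)
          · exact (B.le_of_opNorm_le hM.1 _).trans (by gcongr; exact ih hM.2 hc.2)
      _ = (B :: L).length * c * M ^ ((B :: L).length - 1) * ‖v‖ := by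
          simp only [List.length_cons, Nat.add_sub_cancel]
          push_cast
          linear_combination c * ‖v‖ * hpow

end Commutator

section Derivative

variable {E : Type*} [NormedAddCommGroup E] [NormedSpace ℂ E]

theorem HasDerivAt.clm_apply_const {B : ℝ → E →L[ℂ] E} {B' : E →L[ℂ] E} {t : ℝ}
    (hB : HasDerivAt B B' t) (v : E) : HasDerivAt (fun s => B s v) (B' v) t :=
  ((ContinuousLinearMap.apply ℂ E v).restrictScalars ℝ).hasFDerivAt.comp_hasDerivAt t hB

theorem HasDerivAt.clm_apply_eq_zero_of_apply_const {B : ℝ → E →L[ℂ] E} {B' : E →L[ℂ] E}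
    {t : ℝ} {v : E} (hB : HasDerivAt B B' t) (hv : ∀ s, B s v = B t v) : B' v = 0 := by
  have h := hB.clm_apply_const v
  rw [show (fun s => B s v) = fun _ => B t v from funext hv] at h
  exact h.unique (hasDerivAt_const t _)

variable {ι : Type*} {B B' : ι → ℝ → E →L[ℂ] E} {v : E} {M : ℝ} {c : ℝ → ℝ} {s : Set ℝ}

theorem exists_hasDerivAt_list_prod_and_norm_apply_le
    (hderiv : ∀ i t, HasDerivAt (B i) (B' i t) t) (hB'v : ∀ i t, B' i t v = 0)
    (hbound : ∀ i t, ‖B i t‖ ≤ M)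
    (hcomm : ∀ i j, ∀ t ∈ s, ‖B' i t * B j t - B j t * B' i t‖ ≤ c t) (L : List ι) :
    ∃ D : ℝ → E →L[ℂ] E, (∀ t, HasDerivAt (fun t => (L.map (B · t)).prod) (D t) t) ∧
      ∃ C, ∀ t ∈ s, ‖D t v‖ ≤ C * c t := by
  induction L with
  | nil => exact ⟨0, fun t => by simpa using hasDerivAt_const t (1 : E →L[ℂ] E), 0, by simp⟩
  | cons i L ih =>
    obtain ⟨D, hD, C, hC⟩ := ih
    refine ⟨fun t => B' i t * (L.map (B · t)).prod + B i t * D t,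
      fun t => (hderiv i t).mul (hD t), L.length * M ^ (L.length - 1) * ‖v‖ + M * C,
      fun t ht => ?_⟩
    have hM0 : 0 ≤ M := (norm_nonneg _).trans (hbound i t)
    have h1 : ‖B' i t ((L.map (B · t)).prod v)‖ ≤ L.length * c t * M ^ (L.length - 1) * ‖v‖ := by
      simpa using (B' i t).norm_apply_list_prod_apply_le (L := L.map (B · t)) (hB'v i t)
        (List.forall_mem_map.2 fun j _ => hbound j t)
        (List.forall_mem_map.2 fun j _ => hcomm i j t ht)
    have h2 : ‖B i t (D t v)‖ ≤ M * (C * c t) :=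
      ((B i t).le_of_opNorm_le (hbound i t) _).trans (by gcongr; exact hC t ht)
    calc ‖(B' i t * (L.map (B · t)).prod + B i t * D t) v‖
        ≤ ‖B' i t ((L.map (B · t)).prod v)‖ + ‖B i t (D t v)‖ := norm_add_le _ _
      _ ≤ (L.length * M ^ (L.length - 1) * ‖v‖ + M * C) * c t := by linarith

end Derivative

theorem exists_tendsto_atBot_of_hasDerivAt_of_norm_le {E : Type*} [NormedAddCommGroup E]
    [NormedSpace ℝ E] [CompleteSpace E] {f f' : ℝ → E} {g : ℝ → ℝ} {a : ℝ}
    (hf : ∀ x ∈ Set.Iic a, HasDerivAt f (f' x) x) (hg : IntegrableOn g (Set.Iic a))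
    (hle : ∀ x ∈ Set.Iic a, ‖f' x‖ ≤ g x) : ∃ l, Tendsto f atBot (nhds l) := by
  have hmeas : AEStronglyMeasurable f' (volume.restrict (Set.Iic a)) :=
    (aestronglyMeasurable_deriv f _).congr
      (ae_restrict_of_forall_mem measurableSet_Iic fun x hx => (hf x hx).deriv)
  have hf' : IntegrableOn f' (Set.Iic a) :=
    hg.mono' hmeas (ae_restrict_of_forall_mem measurableSet_Iic hle)
  exact ⟨_, tendsto_limUnder_of_hasDerivAt_of_integrableOn_Iic hf hf'⟩

theorem stmt5_general
    {H : Type*} [NormedAddCommGroup H] [InnerProductSpace ℂ H] [CompleteSpace H]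
    (θ : H) (n : ℕ) (B B' : Fin n → ℝ → (H →L[ℂ] H))
    (hderiv : ∀ i τ, HasDerivAt (B i) (B' i τ) τ)
    (hconst : ∀ i τ τ', (B i τ) θ = (B i τ') θ)
    (M : ℝ) (hbound : ∀ i τ, ‖B i τ‖ ≤ M)
    (c : ℝ → ℝ)
    (hc_int : IntegrableOn c (Set.Iic (0 : ℝ)))
    (hcomm : ∀ i j τ, τ ≤ 0 →
      ‖B' i τ * B j τ - B j τ * B' i τ‖ ≤ c τ) :
    ∃ Ψ : H, Tendsto (fun τ : ℝ => ((List.ofFn fun i => B i τ).prod) θ) atBot (nhds Ψ) := by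
  have hB'θ : ∀ i τ, B' i τ θ = 0 := fun i τ =>
    (hderiv i τ).clm_apply_eq_zero_of_apply_const fun s => hconst i s τ
  obtain ⟨D, hD, C, hC⟩ := exists_hasDerivAt_list_prod_and_norm_apply_le (s := Set.Iic 0)
    hderiv hB'θ hbound (fun i j t ht => hcomm i j t ht) (List.finRange n)
  have hΨ : ∀ τ, HasDerivAt (fun τ => (List.ofFn fun i => B i τ).prod θ) (D τ θ) τ := by
    simpa only [List.ofFn_eq_map] using fun τ => (hD τ).clm_apply_const θ
  exact exists_tendsto_atBot_of_hasDerivAt_of_norm_le (fun τ _ => hΨ τ)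
    (hc_int.const_mul C) hC

/-- Hilbert-space version: `Ψ(τ) = B_1(τ)⋯B_n(τ)θ` converges as `τ → −∞`
under a summable commutator bound `‖[B_i'(τ), B_j(τ)]‖ ≤ c(τ)` for `τ ≤ 0`. -/
theorem stmt5
    {H : Type*} [NormedAddCommGroup H] [InnerProductSpace ℂ H] [CompleteSpace H]
    (θ : H) (hθ : ‖θ‖ = 1) (n : ℕ) (B B' : Fin n → ℝ → (H →L[ℂ] H))
    (hderiv : ∀ i τ, HasDerivAt (B i) (B' i τ) τ)
    (hcont : ∀ i, Continuous (B' i))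
    (hconst : ∀ i τ τ', (B i τ) θ = (B i τ') θ)
    (M : ℝ) (hbound : ∀ i τ, ‖B i τ‖ ≤ M)
    (c : ℝ → ℝ) (hc_nonneg : ∀ τ, 0 ≤ c τ)
    (hc_int : IntegrableOn c (Set.Iic (0 : ℝ)))
    (hcomm : ∀ i j τ, τ ≤ 0 →
      ‖B' i τ * B j τ - B j τ * B' i τ‖ ≤ c τ) :
    ∃ Ψ : H, Tendsto (fun τ : ℝ => ((List.ofFn fun i => B i τ).prod) θ) atBot (nhds Ψ) :=
  stmt5_general θ n B B' hderiv hconst M hbound c hc_int hcomm
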